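/- In the resource-acquisition variant of the machine: suppose every procedure of the program prg matches its specification. If safeState(s, env, args, Q) holds and s ↓ H, r_con, r_tot, v (the state halts with final heap H, total consumed resource r_con, total acquired resource r_tot and return value v), then there exists a resource r' such that Q(env, args, H, r', v) holds and r_con · r' ⊑ r_tot. -/

import Mathlib

/-- An ordered commutative monoid of consumable resources, whose unit is the
least element and whose operation is monotone. -/
structure ResMon : Type 1 where
  carrier : Type
  le : carrier → carrier → Prop
  op : carrier → carrier → carrier
  e : carrier
  le_refl : ∀ r, le r r
  le_trans : ∀ {a b c}, le a b → le b c → le a c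
  op_comm : ∀ a b, op a b = op b a
  op_assoc : ∀ a b c, op (op a b) c = op a (op b c)
  op_e : ∀ a, op a e = a
  e_le : ∀ a, le e a
  op_mono : ∀ {a b c d}, le a b → le c d → le (op a c) (op b d)

/-- Values: possibly-null addresses and integers. -/
inductive Val (A : Type) where
  | addr : Option A → Val A
  | int : ℤ → Val A

/-- Field types. -/
inductive Ty where
  | int | ref

def Ty.defaultVal {A : Type} : Ty → Val A
  | .int => .int 0
  | .ref => .addr none

/-- Heaps: finite partial maps from (address, field name) pairs to values. -/
abbrev Heap (A F : Type) : Type := Finmap (fun _ : A × F => Val A)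

/-- Instructions of the virtual machine (resource-acquisition variant): `consume r`
is replaced by `consume` and `acquire` is added; both take the integer naming the
resource from the operand stack. -/
inductive Instr (F P R : Type) where
  | iconst (z : ℤ)
  | ibinop (op : ℤ → ℤ → ℤ)
  | pop
  | load (n : ℕ)
  | store (n : ℕ)
  | aconstNull
  | binarycmp (cmp : ℤ → ℤ → Prop) (offset : ℕ)
  | unarycmp (cmp : ℤ → ℤ → Prop) (offset : ℕ)
  | ifnull (offset : ℕ)
  | goto (offset : ℕ)
  | new (desc : List (F × Ty))
  | getfield (f : F)
  | putfield (f : F)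
  | free (desc : List (F × Ty))
  | consume
  | acquire
  | ret
  | call (p : P)

/-- Activation frames. -/
structure Frame (A F P R : Type) where
  code : List (Instr F P R)
  stack : List (Val A)
  locals : ℕ → Option (Val A)
  pc : ℕ

/-- Intra-frame small-step semantics (Figure 1). -/
inductive FrmStep {A F P R : Type} : Frame A F P R → Frame A F P R → Prop where
  | iconst {code : List (Instr F P R)} {S L pc z} :
      code[pc]? = some (.iconst z) →
      FrmStep ⟨code, S, L, pc⟩ ⟨code, .int z :: S, L, pc + 1⟩
  | ibinop {code : List (Instr F P R)} {op S L pc z₁ z₂} :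
      code[pc]? = some (.ibinop op) →
      FrmStep ⟨code, .int z₁ :: .int z₂ :: S, L, pc⟩ ⟨code, .int (op z₁ z₂) :: S, L, pc + 1⟩
  | pop {code : List (Instr F P R)} {v : Val A} {S L pc} :
      code[pc]? = some .pop →
      FrmStep ⟨code, v :: S, L, pc⟩ ⟨code, S, L, pc + 1⟩
  | load {code : List (Instr F P R)} {S L pc n} {v : Val A} :
      code[pc]? = some (.load n) → L n = some v →
      FrmStep ⟨code, S, L, pc⟩ ⟨code, v :: S, L, pc + 1⟩
  | store {code : List (Instr F P R)} {S L pc n} {v : Val A} :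
      code[pc]? = some (.store n) →
      FrmStep ⟨code, v :: S, L, pc⟩ ⟨code, S, fun m => if m = n then some v else L m, pc + 1⟩
  | aconstNull {code : List (Instr F P R)} {S L pc} :
      code[pc]? = some .aconstNull →
      FrmStep ⟨code, S, L, pc⟩ ⟨code, .addr none :: S, L, pc + 1⟩
  | binarycmpT {code : List (Instr F P R)} {cmp off S L pc z₁ z₂} :
      code[pc]? = some (.binarycmp cmp off) → cmp z₁ z₂ →
      FrmStep ⟨code, .int z₁ :: .int z₂ :: S, L, pc⟩ ⟨code, S, L, off⟩
  | binarycmpF {code : List (Instr F P R)} {cmp off S L pc z₁ z₂} :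
      code[pc]? = some (.binarycmp cmp off) → ¬ cmp z₁ z₂ →
      FrmStep ⟨code, .int z₁ :: .int z₂ :: S, L, pc⟩ ⟨code, S, L, pc + 1⟩
  | unarycmpT {code : List (Instr F P R)} {cmp off S L pc z} :
      code[pc]? = some (.unarycmp cmp off) → cmp z 0 →
      FrmStep ⟨code, .int z :: S, L, pc⟩ ⟨code, S, L, off⟩
  | unarycmpF {code : List (Instr F P R)} {cmp off S L pc z} :
      code[pc]? = some (.unarycmp cmp off) → ¬ cmp z 0 →
      FrmStep ⟨code, .int z :: S, L, pc⟩ ⟨code, S, L, pc + 1⟩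
  | ifnullT {code : List (Instr F P R)} {off S L pc} :
      code[pc]? = some (.ifnull off) →
      FrmStep ⟨code, .addr none :: S, L, pc⟩ ⟨code, S, L, off⟩
  | ifnullF {code : List (Instr F P R)} {off S L pc} {a : A} :
      code[pc]? = some (.ifnull off) →
      FrmStep ⟨code, .addr (some a) :: S, L, pc⟩ ⟨code, S, L, pc + 1⟩
  | goto {code : List (Instr F P R)} {off S L pc} :
      code[pc]? = some (.goto off) →
      FrmStep ⟨code, S, L, pc⟩ ⟨code, S, L, off⟩

variable {A F P : Type}

/-- Allocate a fresh object at address `a` with fields given by `desc`. -/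
def allocHeap [DecidableEq A] [DecidableEq F] (H : Heap A F) (a : A) (desc : List (F × Ty)) :
    Heap A F :=
  desc.foldl (fun h fd => h.insert (a, fd.1) fd.2.defaultVal) H

/-- Remove the fields of the object at address `a` described by `desc`. -/
def freeHeap [DecidableEq A] [DecidableEq F] (H : Heap A F) (a : A) (desc : List (F × Ty)) :
    Heap A F :=
  desc.foldl (fun h fd => h.erase (a, fd.1)) H

/-- Heap- and resource-mutating small-step semantics, acquisition variant
(Section 3.5): `f, H ⟶mut f', H', r_c, r_a` where `r_c` is consumed and `r_a`
acquired, with `res : ℤ → 𝓡` naming resources by integers. -/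
inductive MutStep (M : ResMon) [DecidableEq A] [DecidableEq F] (res : ℤ → M.carrier) :
    Frame A F P M.carrier → Heap A F → Frame A F P M.carrier → Heap A F →
    M.carrier → M.carrier → Prop where
  | new {code S L pc desc} {a : A} {H : Heap A F} :
      code[pc]? = some (.new desc) → (∀ fnm : F, (a, fnm) ∉ H) →
      MutStep M res ⟨code, S, L, pc⟩ H ⟨code, .addr (some a) :: S, L, pc + 1⟩
        (allocHeap H a desc) M.e M.e
  | getfield {code S L pc f} {a : A} {v : Val A} {H : Heap A F} :
      code[pc]? = some (.getfield f) → H.lookup (a, f) = some v →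
      MutStep M res ⟨code, .addr (some a) :: S, L, pc⟩ H ⟨code, v :: S, L, pc + 1⟩ H M.e M.e
  | putfield {code S L pc f} {a : A} {v : Val A} {H : Heap A F} :
      code[pc]? = some (.putfield f) →
      MutStep M res ⟨code, .addr (some a) :: v :: S, L, pc⟩ H ⟨code, S, L, pc + 1⟩
        (H.insert (a, f) v) M.e M.e
  | free {code S L pc desc} {a : A} {H : Heap A F} :
      code[pc]? = some (.free desc) →
      MutStep M res ⟨code, .addr (some a) :: S, L, pc⟩ H ⟨code, S, L, pc + 1⟩
        (freeHeap H a desc) M.e M.e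
  | consume {code S L pc z} {H : Heap A F} :
      code[pc]? = some .consume →
      MutStep M res ⟨code, .int z :: S, L, pc⟩ H ⟨code, S, L, pc + 1⟩ H (res z) M.e
  | acquireGrant {code S L pc z} {H : Heap A F} :
      code[pc]? = some .acquire →
      MutStep M res ⟨code, .int z :: S, L, pc⟩ H ⟨code, .int 1 :: S, L, pc + 1⟩ H M.e (res z)
  | acquireDeny {code S L pc z} {H : Heap A F} :
      code[pc]? = some .acquire →
      MutStep M res ⟨code, .int z :: S, L, pc⟩ H ⟨code, .int 0 :: S, L, pc + 1⟩ H M.e M.e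

/-- Procedure specifications ⟨𝔼, P, Q⟩ (with the arity determined by the name). -/
structure ProcSpec (M : ResMon) (A F : Type) where
  arity : ℕ
  E : Type
  pre : E → List (Val A) → Heap A F → M.carrier → Prop
  post : E → List (Val A) → Heap A F → M.carrier → Val A → Prop

/-- Intermediate assertions. -/
abbrev Assn (M : ResMon) (A F E : Type) : Type :=
  E → List (Val A) → M.carrier → Heap A F → List (Val A) → (ℕ → Option (Val A)) → Prop

/-- Post-conditions. -/
abbrev Post (M : ResMon) (A F E : Type) : Type :=
  E → List (Val A) → Heap A F → M.carrier → Val A → Prop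

/-- The ternary combination relation `R (H₁,r₁) (H₂,r₂) (H₃,r₃)` on heap–resource pairs. -/
def Combines (M : ResMon) [DecidableEq A] [DecidableEq F] (H₁ : Heap A F) (r₁ : M.carrier)
    (H₂ : Heap A F) (r₂ : M.carrier) (H₃ : Heap A F) (r₃ : M.carrier) : Prop :=
  H₁.Disjoint H₂ ∧ H₁ ∪ H₂ = H₃ ∧ M.le (M.op r₁ r₂) r₃

/-- The assertion `A` such that `C ⊢_Q {A} ⇒ i : ι` by the program-logic rules (Figure 4). -/
def instrPre (M : ResMon) [DecidableEq A] [DecidableEq F] {E : Type} (res : ℤ → M.carrier)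
    (specs : P → ProcSpec M A F) (Q : Post M A F E) (C : ℕ → Assn M A F E) (i : ℕ) :
    Instr F P M.carrier → Assn M A F E
  | .iconst z => fun env args r H S L => C (i + 1) env args r H (.int z :: S) L
  | .ibinop op => fun env args r H S L => ∀ z₁ z₂ S', S = .int z₁ :: .int z₂ :: S' →
      C (i + 1) env args r H (.int (op z₁ z₂) :: S') L
  | .pop => fun env args r H S L => ∀ v S', S = v :: S' → C (i + 1) env args r H S' L
  | .load n => fun env args r H S L => ∀ v, L n = some v → C (i + 1) env args r H (v :: S) L
  | .store n => fun env args r H S L => ∀ v S', S = v :: S' →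
      C (i + 1) env args r H S' (fun m => if m = n then some v else L m)
  | .aconstNull => fun env args r H S L => C (i + 1) env args r H (.addr none :: S) L
  | .binarycmp cmp off => fun env args r H S L => ∀ z₁ z₂ S', S = .int z₁ :: .int z₂ :: S' →
      (cmp z₁ z₂ → C off env args r H S' L) ∧ (¬ cmp z₁ z₂ → C (i + 1) env args r H S' L)
  | .unarycmp cmp off => fun env args r H S L => ∀ z S', S = .int z :: S' →
      (cmp z 0 → C off env args r H S' L) ∧ (¬ cmp z 0 → C (i + 1) env args r H S' L)
  | .ifnull off => fun env args r H S L => ∀ a S', S = .addr a :: S' →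
      (a ≠ none → C (i + 1) env args r H S' L) ∧ (a = none → C off env args r H S' L)
  | .goto off => fun env args r H S L => C off env args r H S L
  | .new desc => fun env args r H S L => ∀ a : A, (∀ fnm : F, (a, fnm) ∉ H) →
      C (i + 1) env args r (allocHeap H a desc) (.addr (some a) :: S) L
  | .getfield f => fun env args r H S L => ∀ a S', S = .addr (some a) :: S' →
      ∃ v, H.lookup (a, f) = some v ∧ C (i + 1) env args r H (v :: S') L
  | .putfield f => fun env args r H S L => ∀ a v S', S = .addr (some a) :: v :: S' →
      (a, f) ∈ H ∧ C (i + 1) env args r (H.insert (a, f) v) S' L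
  | .free desc => fun env args r H S L => ∀ a S', S = .addr (some a) :: S' →
      C (i + 1) env args r (freeHeap H a desc) S' L
  | .consume => fun env args r H S L => ∀ z S', S = .int z :: S' →
      ∃ r', M.le (M.op (res z) r') r ∧ C (i + 1) env args r' H S' L
  | .acquire => fun env args r H S L => ∀ z S', S = .int z :: S' →
      C (i + 1) env args (M.op r (res z)) H (.int 1 :: S') L ∧
      C (i + 1) env args r H (.int 0 :: S') L
  | .ret => fun env args r H S _ => ∀ v S', S = v :: S' → Q env args H r v
  | .call p => fun env args r H S L => ∀ args' S', S = args' ++ S' →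
      args'.length = (specs p).arity →
      ∃ (env' : (specs p).E) (H₁ H₂ : Heap A F) (r₁ r₂ : M.carrier),
        Combines M H₁ r₁ H₂ r₂ H r ∧ (specs p).pre env' args' H₁ r₁ ∧
        ∀ (v : Val A) (H₁' : Heap A F) (r₁' : M.carrier),
          H₁'.Disjoint H₂ → (specs p).post env' args' H₁' r₁' v →
          C (i + 1) env args (M.op r₁' r₂) (H₁' ∪ H₂) (v :: S') L

/-- `C ⊢ code : Q`: the certificate `C` certifies `code` against post-condition `Q`. -/
def CertValid (M : ResMon) [DecidableEq A] [DecidableEq F] {E : Type} (res : ℤ → M.carrier)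
    (specs : P → ProcSpec M A F) (Q : Post M A F E) (C : ℕ → Assn M A F E)
    (code : List (Instr F P M.carrier)) : Prop :=
  ∀ i ι, code[i]? = some ι →
    ∀ env args r H S L, C i env args r H S L → instrPre M res specs Q C i ι env args r H S L

/-- `safeFrame(env, f, H, r, args, Q)`. -/
def SafeFrame (M : ResMon) [DecidableEq A] [DecidableEq F] {E : Type} (res : ℤ → M.carrier)
    (specs : P → ProcSpec M A F) (env : E) (f : Frame A F P M.carrier)
    (H : Heap A F) (r : M.carrier) (args : List (Val A)) (Q : Post M A F E) : Prop :=
  ∃ C : ℕ → Assn M A F E, CertValid M res specs Q C f.code ∧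
    C f.pc env args r H f.stack f.locals

/-- Locals initialised to the list of arguments, `⌜args⌝`. -/
def toLocals {A : Type} (args : List (Val A)) : ℕ → Option (Val A) := fun n => args[n]?

/-- Machine states of the acquisition variant: consumed resource, total allowed
resource, heap and frame stack. -/
structure State (M : ResMon) (A F P : Type) where
  consumed : M.carrier
  total : M.carrier
  heap : Heap A F
  frames : List (Frame A F P M.carrier)

/-- Small-step semantics of the full machine, acquisition variant. -/
inductive ProgStep (M : ResMon) [DecidableEq A] [DecidableEq F] (res : ℤ → M.carrier)
    (prg : P → List (Instr F P M.carrier)) (specs : P → ProcSpec M A F) :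
    State M A F P → State M A F P → Prop where
  | frm {r rt H f f' fs} : FrmStep f f' →
      ProgStep M res prg specs ⟨r, rt, H, f :: fs⟩ ⟨r, rt, H, f' :: fs⟩
  | mut {r rt H H' f f' fs rc ra} : MutStep M res f H f' H' rc ra →
      ProgStep M res prg specs ⟨r, rt, H, f :: fs⟩ ⟨M.op r rc, M.op rt ra, H', f' :: fs⟩
  | ret {r rt H code v S L pc code' S' L' pc' fs} :
      code[pc]? = some .ret →
      ProgStep M res prg specs
        ⟨r, rt, H, (⟨code, v :: S, L, pc⟩ : Frame A F P M.carrier) :: ⟨code', S', L', pc'⟩ :: fs⟩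
        ⟨r, rt, H, (⟨code', v :: S', L', pc'⟩ : Frame A F P M.carrier) :: fs⟩
  | call {r rt H code args S L pc fs p} :
      code[pc]? = some (.call p) → args.length = (specs p).arity →
      ProgStep M res prg specs
        ⟨r, rt, H, (⟨code, args ++ S, L, pc⟩ : Frame A F P M.carrier) :: fs⟩
        ⟨r, rt, H, (⟨prg p, [], toLocals args, 0⟩ : Frame A F P M.carrier) ::
               ⟨code, S, L, pc + 1⟩ :: fs⟩

/-- `safeStack(fs, H, r, env_cur, args_cur, Q_cur, env_top, args_top, Q_top)`. -/
inductive SafeStack (M : ResMon) [DecidableEq A] [DecidableEq F] (res : ℤ → M.carrier)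
    (specs : P → ProcSpec M A F) :
    List (Frame A F P M.carrier) → Heap A F → M.carrier →
    (Ec : Type) → Ec → List (Val A) → Post M A F Ec →
    (Et : Type) → Et → List (Val A) → Post M A F Et → Prop where
  | nil (E : Type) (env : E) (args : List (Val A)) (Q : Post M A F E) :
      SafeStack M res specs [] ∅ M.e E env args Q E env args Q
  | cons {code S L pc fs} {H : Heap A F} {r : M.carrier}
      (Ec : Type) (envc : Ec) (argsc : List (Val A)) (Qc : Post M A F Ec)
      (Et : Type) (envt : Et) (argst : List (Val A)) (Qt : Post M A F Et)
      (H₁ H₂ : Heap A F) (r₁ r₂ : M.carrier)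
      (E : Type) (env : E) (args : List (Val A)) (Q : Post M A F E)
      (C : ℕ → Assn M A F E) :
      Combines M H₁ r₁ H₂ r₂ H r →
      CertValid M res specs Q C code →
      (∀ (v : Val A) (H₂' : Heap A F) (r₂' : M.carrier),
        H₂'.Disjoint H₁ → Qc envc argsc H₂' r₂' v →
        C pc env args (M.op r₂' r₁) (H₂' ∪ H₁) (v :: S) L) →
      SafeStack M res specs fs H₂ r₂ E env args Q Et envt argst Qt →
      SafeStack M res specs ((⟨code, S, L, pc⟩ : Frame A F P M.carrier) :: fs) H r
        Ec envc argsc Qc Et envt argst Qt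

/-- `safeState(s, env, args, Q)` for the acquisition variant: the consumed
resource plus the future resource is below the state's total allowed resource. -/
def SafeState (M : ResMon) [DecidableEq A] [DecidableEq F] {E : Type} (res : ℤ → M.carrier)
    (specs : P → ProcSpec M A F) (s : State M A F P)
    (env : E) (args : List (Val A)) (Q : Post M A F E) : Prop :=
  ∃ rfut : M.carrier, M.le (M.op s.consumed rfut) s.total ∧
    ∃ (H₁ H₂ : Heap A F) (r₁ r₂ : M.carrier), Combines M H₁ r₁ H₂ r₂ s.heap rfut ∧
      ∃ (f : Frame A F P M.carrier) (fs' : List (Frame A F P M.carrier)),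
        s.frames = f :: fs' ∧
        ∃ (Ec : Type) (envc : Ec) (argsc : List (Val A)) (Qc : Post M A F Ec),
          SafeFrame M res specs envc f H₁ r₁ argsc Qc ∧
          SafeStack M res specs fs' H₂ r₂ Ec envc argsc Qc E env args Q

/-- Every procedure of the program matches its specification. -/
def PrgMatches (M : ResMon) [DecidableEq A] [DecidableEq F] (res : ℤ → M.carrier)
    (prg : P → List (Instr F P M.carrier)) (specs : P → ProcSpec M A F) : Prop :=
  ∀ p : P, ∃ C : ℕ → Assn M A F (specs p).E,
    CertValid M res specs (specs p).post C (prg p) ∧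
    ∀ env args H r, (specs p).pre env args H r → C 0 env args r H [] (toLocals args)

/-- `s ↓ H, r_con, r_tot, v`: the state halts with final heap `H`, total consumed
resource `r_con`, total acquired resource `r_tot` and return value `v`. -/
def Halts (M : ResMon) (s : State M A F P) (H : Heap A F) (rcon rtot : M.carrier)
    (v : Val A) : Prop :=
  ∃ (code : List (Instr F P M.carrier)) (S : List (Val A)) (L : ℕ → Option (Val A)) (pc : ℕ),
    s.frames = [⟨code, v :: S, L, pc⟩] ∧ code[pc]? = some .ret ∧ s.heap = H ∧
    s.consumed = rcon ∧ s.total = rtot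

theorem ResMon.op_le_op_left (M : ResMon) {a b : M.carrier} (c : M.carrier) (h : M.le a b) :
    M.le (M.op c a) (M.op c b) :=
  M.op_mono (M.le_refl c) h

section Soundness

variable {M : ResMon} [DecidableEq A] [DecidableEq F] {res : ℤ → M.carrier}
  {specs : P → ProcSpec M A F}

theorem Combines.eq_and_le_of_empty_right {H₁ H : Heap A F} {r₁ r : M.carrier}
    (h : Combines M H₁ r₁ ∅ M.e H r) : H₁ = H ∧ M.le r₁ r := by
  obtain ⟨-, hunion, hle⟩ := h
  rw [Finmap.union_empty] at hunion
  rw [M.op_e] at hle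
  exact ⟨hunion, hle⟩

theorem SafeFrame.post_of_ret {E : Type} {env : E} {args : List (Val A)} {Q : Post M A F E}
    {code : List (Instr F P M.carrier)} {v : Val A} {S : List (Val A)}
    {L : ℕ → Option (Val A)} {pc : ℕ} {H : Heap A F} {r : M.carrier}
    (hf : SafeFrame M res specs env ⟨code, v :: S, L, pc⟩ H r args Q)
    (hret : code[pc]? = some .ret) : Q env args H r v := by
  obtain ⟨C, hcert, hC⟩ := hf
  exact hcert pc .ret hret env args r H (v :: S) L hC v S rfl

end Soundness

theorem soundness_halt_acquire_general (M : ResMon) {A F P : Type}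
    [DecidableEq A] [DecidableEq F] {E : Type} (res : ℤ → M.carrier)
    (specs : P → ProcSpec M A F)
    (s : State M A F P) (env : E) (args : List (Val A)) (Q : Post M A F E)
    (H : Heap A F) (rcon rtot : M.carrier) (v : Val A)
    (hsafe : SafeState M res specs s env args Q)
    (hhalt : Halts M s H rcon rtot v) :
    ∃ r' : M.carrier, Q env args H r' v ∧ M.le (M.op rcon r') rtot := by
  obtain ⟨rcon, rtot, H, frames⟩ := s
  obtain ⟨code, S, L, pc, rfl, hret, rfl, rfl, rfl⟩ := hhalt
  obtain ⟨rfut, hle, H₁, H₂, r₁, r₂, hcomb, f, fs, hframes, Ec, envc, argsc, Qc, hframe,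
    hstack⟩ := hsafe
  obtain ⟨rfl, rfl⟩ := List.cons.inj hframes
  -- the empty safe stack has heap `∅` and resource `e`, and makes `Qc envc argsc` be `Q env args`
  cases hstack
  obtain ⟨rfl, hr⟩ := hcomb.eq_and_le_of_empty_right
  exact ⟨r₁, hframe.post_of_ret hret, M.le_trans (M.op_le_op_left rcon hr) hle⟩

/-- **Theorem (Soundness, resource-acquisition variant, part 2).** If every
procedure of `prg` matches its specification, `safeState(s, env, args, Q)` holds
and `s ↓ H, r_con, r_tot, v`, then there exists `r'` with
`Q(env, args, H, r', v)` and `r_con · r' ⊑ r_tot`. -/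
theorem soundness_halt_acquire (M : ResMon) {A F P : Type}
    [DecidableEq A] [DecidableEq F] {E : Type} (res : ℤ → M.carrier)
    (prg : P → List (Instr F P M.carrier)) (specs : P → ProcSpec M A F)
    (hmatch : PrgMatches M res prg specs)
    (s : State M A F P) (env : E) (args : List (Val A)) (Q : Post M A F E)
    (H : Heap A F) (rcon rtot : M.carrier) (v : Val A)
    (hsafe : SafeState M res specs s env args Q)
    (hhalt : Halts M s H rcon rtot v) :
    ∃ r' : M.carrier, Q env args H r' v ∧ M.le (M.op rcon r') rtot :=
  soundness_halt_acquire_general M res specs s env args Q H rcon rtot v hsafe hhalt
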